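/- Let φₙ ∈ Homeo_bd(Yₙ) with r(φₙ) ≥ n/f(n) for infinitely many n. Then there exists g ∈ D_f such that g − ψ(g) ∉ C_0(X,A), where ψ is the automorphism of C_b(X,A) canonically determined by {φₙ}; i.e., the induced automorphism of the quotient moves some element of C_f. -/

import Mathlib

/-! Pick points `pₙ ∈ Yₙ` realizing `r(φₙ)` and put on `Yₙ` the ramp
`x ↦ min 1 ((f n / n) * d(x, pₙ))`: it is `f n / n`-Lipschitz, vanishes at `pₙ`, and equals `1`
at `φₙ(pₙ)` whenever `r(φₙ) ≥ n / f n`. The `Yₙ` form a locally finite family of disjoint closed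
sets, so the ramps glue to a continuous function on their union, which Tietze extends to
`h : X → [0, 1]`. For any `a ≠ 0`, `g = h • a` moves by less than `‖a‖ / n` at scale `1 / f n` on
`Yₙ`, so `g ∈ D_f`; but `‖g(pₙ) - g(φ(pₙ))‖ = ‖a‖` for infinitely many `n`, while `pₙ` leaves
every compact set. -/

open Filter

/-- The subalgebra `D_f(X, A, Yₙ)` of `C_b(X, A)`. -/
def Df {X : Type*} [MetricSpace X] {A : Type*} [NonUnitalNormedRing A]
    (Y : ℕ → Set X) (f : ℕ → ℕ) : Set (BoundedContinuousFunction X A) :=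
  {g | ∀ ε > 0, ∀ᶠ n in atTop, ∀ x ∈ Y n, ∀ y ∈ Y n,
      dist x y < 1 / (f n : ℝ) → ‖g x - g y‖ < ε}

open Set Topology NNReal

theorem locallyFinite_of_finite_nonempty_inter_compact {X : Type*} [TopologicalSpace X]
    [FirstCountableTopology X] {Y : ℕ → Set X}
    (hY : ∀ K : Set X, IsCompact K → {n | (K ∩ Y n).Nonempty}.Finite) : LocallyFinite Y := by
  intro x
  obtain ⟨U, hU⟩ := (𝓝 x).exists_antitone_basis
  by_contra! hinf
  -- points of infinitely many `Y n` then converge to `x`, and together with `x` form a compact set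
  choose n hYU hnk using fun k => (hinf (U k) (hU.mem k)).exists_gt k
  choose y hyY hyU using hYU
  have hK : IsCompact (insert x (range y)) := (hU.tendsto hyU).isCompact_insert_range
  refine (hY _ hK).not_infinite (infinite_of_not_bddAbove fun ⟨B, hB⟩ => ?_)
  exact (hnk B).not_ge (hB ⟨y B, mem_insert_of_mem _ (mem_range_self B), hyY B⟩)

theorem tendsto_cocompact_of_forall_mem {X : Type*} [TopologicalSpace X] {Y : ℕ → Set X}
    (hY : ∀ K : Set X, IsCompact K → {n | (K ∩ Y n).Nonempty}.Finite) {x : ℕ → X}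
    (hx : ∀ n, x n ∈ Y n) : Tendsto x atTop (cocompact X) := by
  rw [← Nat.cofinite_eq_atTop, hasBasis_cocompact.tendsto_right_iff]
  intro K hK
  refine eventually_cofinite.2 ((hY K hK).subset fun n hn => ⟨x n, ?_, hx n⟩)
  simpa using hn

theorem not_tendsto_cocompact_of_frequently_le_norm {X E : Type*} [TopologicalSpace X]
    [SeminormedAddCommGroup E] {Y : ℕ → Set X}
    (hY : ∀ K : Set X, IsCompact K → {n | (K ∩ Y n).Nonempty}.Finite) {x : ℕ → X}
    (hx : ∀ n, x n ∈ Y n) {u : X → E} {r : ℝ} (hr : 0 < r)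
    (hu : ∃ᶠ n in atTop, r ≤ ‖u (x n)‖) : ¬ Tendsto u (cocompact X) (𝓝 0) := fun hlim => by
  have hsmall := (hlim.comp (tendsto_cocompact_of_forall_mem hY hx)).eventually
    (Metric.ball_mem_nhds 0 hr)
  obtain ⟨n, hle, hlt⟩ := (hu.and_eventually hsmall).exists
  exact (mem_ball_zero_iff.1 hlt).not_ge hle

theorem exists_continuous_forall_mem_eqOn {X ι : Type*} [TopologicalSpace X] [NormalSpace X]
    {Y : ι → Set X} (hY : LocallyFinite Y) (hcl : ∀ i, IsClosed (Y i))
    (hd : Pairwise fun i j => Disjoint (Y i) (Y j)) {t : Set ℝ} [t.OrdConnected]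
    (hne : t.Nonempty) (F : ι → X → ℝ) (hF : ∀ i, ContinuousOn (F i) (Y i))
    (hFt : ∀ i, ∀ x ∈ Y i, F i x ∈ t) :
    ∃ h : C(X, ℝ), (∀ x, h x ∈ t) ∧ ∀ i, EqOn h (F i) (Y i) := by
  classical
  let G : X → ℝ := fun x => if hx : ∃ i, x ∈ Y i then F hx.choose x else 0
  have hG : ∀ i, EqOn G (F i) (Y i) := by
    intro i x hx
    have hex : ∃ i, x ∈ Y i := ⟨i, hx⟩
    have hi : hex.choose = i := by
      by_contra hne
      exact (hd hne).ne_of_mem hex.choose_spec hx rfl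
    simp only [G, dif_pos hex, hi]
  have hGc : ContinuousOn G (⋃ i, Y i) :=
    hY.continuousOn_iUnion hcl fun i => (hF i).congr (hG i)
  obtain ⟨h, ht, hres⟩ := ContinuousMap.exists_restrict_eq_forall_mem_of_closed
    ⟨(⋃ i, Y i).domRestrict G, hGc.domRestrict⟩ (t := t) (fun ⟨x, hx⟩ => by
      obtain ⟨i, hi⟩ := mem_iUnion.1 hx
      simpa [hG i hi] using hFt i x hi) hne (hY.isClosed_iUnion hcl)
  refine ⟨h, ht, fun i x hx => ?_⟩
  simpa [hG i hx] using DFunLike.congr_fun hres ⟨x, mem_iUnion_of_mem i hx⟩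

theorem mem_Df_of_lipschitzOnWith {X : Type*} [MetricSpace X] {A : Type*}
    [NonUnitalNormedRing A] {Y : ℕ → Set X} {f : ℕ → ℕ} (g : BoundedContinuousFunction X A)
    (L : ℕ → ℝ≥0) (hg : ∀ n, LipschitzOnWith (L n) g (Y n))
    (hL : Tendsto (fun n => (L n : ℝ) / f n) atTop (𝓝 0)) : g ∈ Df Y f := by
  intro ε hε
  filter_upwards [hL.eventually (gt_mem_nhds hε)] with n hn x hx y hy hxy
  calc ‖g x - g y‖ = dist (g x) (g y) := (dist_eq_norm _ _).symm
    _ ≤ L n * dist x y := (hg n).dist_le_mul x hx y hy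
    _ ≤ L n * (1 / f n) := by gcongr
    _ < ε := by rwa [mul_one_div]

theorem LipschitzOnWith.smul_const {X 𝕜 E : Type*} [PseudoMetricSpace X] [NormedField 𝕜]
    [SeminormedAddCommGroup E] [NormedSpace 𝕜 E] {K : ℝ≥0} {h : X → 𝕜} {s : Set X}
    (hh : LipschitzOnWith K h s) (a : E) : LipschitzOnWith (K * ‖a‖₊) (fun x => h x • a) s :=
  LipschitzOnWith.of_dist_le_mul fun x hx y hy => by
    rw [dist_eq_norm, ← sub_smul, norm_smul, ← dist_eq_norm, NNReal.coe_mul, coe_nnnorm,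
      mul_right_comm]
    gcongr
    exact hh.dist_le_mul x hx y hy

theorem lipschitzWith_min_one_mul_dist {X : Type*} [PseudoMetricSpace X] (c : ℝ≥0) (p : X) :
    LipschitzWith c (fun x => min 1 (c * dist x p)) := by
  simpa using ((lipschitzWith_smul (c : ℝ)).comp (LipschitzWith.dist_left p)).const_min 1

theorem large_radius_moves_Cf_general {X : Type*} [MetricSpace X]
    {A : Type*} [NonUnitalNormedRing A] [NormedSpace ℂ A] [Nontrivial A]
    (Y : ℕ → Set X) (hYc : ∀ n, IsCompact (Y n)) (hYi : ∀ n, (Y n).Infinite)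
    (hYd : Pairwise fun i j => Disjoint (Y i) (Y j))
    (hYf : ∀ K : Set X, IsCompact K → {n | (K ∩ Y n).Nonempty}.Finite)
    (Φ : X ≃ₜ X)
    (hΦmaps : ∀ n, Φ '' Y n = Y n)
    (f : ℕ → ℕ) (hf : ∀ n, 0 < f n)
    (hlarge : ∃ᶠ n : ℕ in atTop, (n : ℝ) / f n ≤ ⨆ x : Y n, dist (x : X) (Φ x)) :
    ∃ g ∈ Df (A := A) Y f,
      ¬ Tendsto (fun x => g x - g (Φ x)) (cocompact X) (nhds 0) := by
  obtain ⟨a, ha⟩ := exists_ne (0 : A)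
  choose p hpY hp using fun n => (hYc n).exists_sSup_image_eq (hYi n).nonempty
    (f := fun x => dist x (Φ x)) (by fun_prop)
  have hΦp : ∀ n, Φ (p n) ∈ Y n := fun n => hΦmaps n ▸ mem_image_of_mem Φ (hpY n)
  let c : ℕ → ℝ≥0 := fun n => f n / n
  have hfn : ∀ n, (f n : ℝ) ≠ 0 := fun n => by exact_mod_cast (hf n).ne'
  obtain ⟨h, h01, hF⟩ := exists_continuous_forall_mem_eqOn
    (locallyFinite_of_finite_nonempty_inter_compact hYf) (fun n => (hYc n).isClosed) hYd
    (nonempty_Icc.2 zero_le_one) (fun n x => min 1 (c n * dist x (p n)))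
    (fun n => (lipschitzWith_min_one_mul_dist (c n) (p n)).continuous.continuousOn)
    (fun n x _ => ⟨le_min zero_le_one (by positivity), min_le_left _ _⟩)
  have hlip : ∀ n, LipschitzOnWith (c n) h (Y n) := fun n =>
    LipschitzOnWith.of_dist_le_mul fun x hx y hy => by
      rw [hF n hx, hF n hy]
      exact (lipschitzWith_min_one_mul_dist (c n) (p n)).dist_le_mul x y
  let g : BoundedContinuousFunction X A :=
    .ofNormedAddCommGroup (fun x => h x • a) (by fun_prop) ‖a‖ fun x => by
      rw [norm_smul, Real.norm_eq_abs, abs_of_nonneg (h01 x).1]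
      exact mul_le_of_le_one_left (norm_nonneg a) (h01 x).2
  refine ⟨g, mem_Df_of_lipschitzOnWith g _ (fun n => (hlip n).smul_const a) ?_,
    not_tendsto_cocompact_of_frequently_le_norm hYf hpY (norm_pos_iff.2 ha) ?_⟩
  · refine (tendsto_const_div_atTop_nhds_zero_nat ‖a‖).congr' ?_
    filter_upwards [eventually_ne_atTop 0] with n hn
    push_cast [c]
    field_simp [hfn n]
  refine (hlarge.and_eventually (eventually_ne_atTop 0)).mono fun n ⟨hn, hn0⟩ => ?_
  rw [← sSup_image' (f := fun x => dist x (Φ x)), hp n] at hn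
  have hone : 1 ≤ (c n : ℝ) * dist (Φ (p n)) (p n) :=
    calc (1 : ℝ) = (f n / n) * (n / f n) := by field_simp [hfn n]
      _ ≤ c n * dist (Φ (p n)) (p n) := by rw [dist_comm]; push_cast [c]; gcongr
  simp [g, hF n (hpY n), hF n (hΦp n), min_eq_left hone]

/-- Let `Φ` be the homeomorphism of `X` canonically extending boundary-fixing
homeomorphisms `φₙ` of the `Yₙ` (identity off `⋃ Yₙ`), and `ψ(g) = g ∘ Φ`. If
`r(φₙ) ≥ n / f n` for infinitely many `n`, then there is `g ∈ D_f` with `g - ψ(g)` not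
vanishing at infinity; i.e. the induced automorphism of the quotient moves some element
of `C_f`. -/
theorem large_radius_moves_Cf {X : Type*} [MetricSpace X] [LocallyCompactSpace X]
    [PolishSpace X] [NoncompactSpace X]
    {A : Type*} [NonUnitalNormedRing A] [StarRing A] [CStarRing A] [NormedSpace ℂ A]
    [IsScalarTower ℂ A A] [SMulCommClass ℂ A A] [StarModule ℂ A] [NormedStarGroup A]
    [CompleteSpace A] [Nontrivial A]
    (Y : ℕ → Set X) (hYc : ∀ n, IsCompact (Y n)) (hYi : ∀ n, (Y n).Infinite)
    (hYd : Pairwise fun i j => Disjoint (Y i) (Y j))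
    (hYf : ∀ K : Set X, IsCompact K → {n | (K ∩ Y n).Nonempty}.Finite)
    (Φ : X ≃ₜ X)
    (hΦoff : ∀ x, x ∉ ⋃ n, Y n → Φ x = x)
    (hΦmaps : ∀ n, Φ '' Y n = Y n)
    (hΦbd : ∀ n, ∀ x ∈ Y n, x ∈ closure (Y n)ᶜ → Φ x = x)
    (f : ℕ → ℕ) (hf : ∀ n, 0 < f n)
    (hlarge : ∃ᶠ n : ℕ in atTop, (n : ℝ) / f n ≤ ⨆ x : Y n, dist (x : X) (Φ x)) :
    ∃ g ∈ Df (A := A) Y f,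
      ¬ Tendsto (fun x => g x - g (Φ x)) (cocompact X) (nhds 0) :=
  large_radius_moves_Cf_general Y hYc hYi hYd hYf Φ hΦmaps f hf hlarge
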